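/- Whipple's transformation: for a nonnegative integer N and complex a, b, c, d, e, Σ_{n=0}^{N} [(a)_n (1+a/2)_n (b)_n (c)_n (d)_n (e)_n (-N)_n] / [(a/2)_n (1+a-b)_n (1+a-c)_n (1+a-d)_n (1+a-e)_n (1+a+N)_n n!] = [(1+a-d-e)_N (1+a)_N / ((1+a-d)_N (1+a-e)_N)] · Σ_{n=0}^{N} [(1+a-b-c)_n (d)_n (e)_n (-N)_n] / [(1+a-b)_n (1+a-c)_n (d+e-a-N)_n n!]. -/
import Mathlib
set_option maxHeartbeats 1000000
noncomputable def ph (x : ℂ) (n : ℕ) : ℂ := ∏ i ∈ Finset.range n, (x + i)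

lemma ph_zero (x : ℂ) : ph x 0 = 1 := by simp [ph]

lemma ph_succ (x : ℂ) (n : ℕ) : ph x (n + 1) = ph x n * (x + n) := by
  simp [ph, Finset.prod_range_succ]

lemma ph_one (x : ℂ) : ph x 1 = x := by simp [ph]

lemma ph_add (x : ℂ) (m n : ℕ) : ph x (m + n) = ph x m * ph (x + m) n := by
  simp only [ph, Finset.prod_range_add]
  congr 1
  refine Finset.prod_congr rfl fun i _ => ?_
  push_cast; ring

lemma ph_ne_zero_of_le {x : ℂ} {m n : ℕ} (h : m ≤ n) (hn : ph x n ≠ 0) : ph x m ≠ 0 := by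
  obtain ⟨k, rfl⟩ := Nat.exists_eq_add_of_le h
  rw [ph_add] at hn
  exact fun h0 => hn (by simp [h0])

lemma ph_shift_ne_zero {x : ℂ} {n : ℕ} (hn : ph x n ≠ 0) {m k : ℕ} (h : m + k ≤ n) :
    ph (x + m) k ≠ 0 := by
  have := ph_ne_zero_of_le h hn
  rw [ph_add] at this
  exact fun h0 => this (by simp [h0])

lemma ph_reflect (x : ℂ) (n : ℕ) : ph (1 - x - n) n = (-1) ^ n * ph x n := by
  have : ph (1 - x - n) n = ∏ i ∈ Finset.range n, (-1 * (x + ((n - 1 - i : ℕ) : ℂ))) := by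
    refine Finset.prod_congr rfl fun i hi => ?_
    have hi' : i < n := Finset.mem_range.mp hi
    have h1 : 1 ≤ n := by omega
    have h2 : i ≤ n - 1 := by omega
    rw [Nat.cast_sub h2, Nat.cast_sub h1]
    push_cast; ring
  rw [this, Finset.prod_mul_distrib, Finset.prod_const, Finset.card_range,
    Finset.prod_range_reflect (fun i => x + (i : ℂ))]
  rfl

lemma ph_nat_eq_zero {n : ℕ} {k : ℕ} (h : n < k) : ph (-(n : ℂ)) k = 0 := by
  rw [ph]
  refine Finset.prod_eq_zero (Finset.mem_range.mpr h) ?_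
  simp

lemma fact_ne_zero (n : ℕ) : (n.factorial : ℂ) ≠ 0 := by
  exact_mod_cast Nat.factorial_ne_zero n

lemma ph_one_add (x : ℂ) (j : ℕ) : ph x (j + 1) = x * ph (x + 1) j := by
  rw [add_comm j 1, ph_add x 1 j, ph_one]
  norm_num

lemma vandermonde : ∀ (n : ℕ) (x z : ℂ), ph z n ≠ 0 →
    ∑ k ∈ Finset.range (n + 1), ph (-(n : ℂ)) k * ph x k / (ph z k * (k.factorial : ℂ))
      = ph (z - x) n / ph z n := by
  intro n
  induction n with
  | zero => intro x z _; simp [ph_zero]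
  | succ n IH =>
    intro x z hz
    have hz0 : z ≠ 0 := by
      have := ph_ne_zero_of_le (Nat.one_le_iff_ne_zero.mpr (by omega)) hz
      rwa [ph_one] at this
    have hzn : ph z n ≠ 0 := ph_ne_zero_of_le (by omega) hz
    have hz1n : ph (z + 1) n ≠ 0 := by
      have := ph_shift_ne_zero hz (m := 1) (k := n) (by omega)
      simpa using this
    -- split the Pochhammer of the top parameter
    have split : ∀ k ∈ Finset.range (n + 2),
        ph (-((n : ℂ) + 1)) k * ph x k / (ph z k * (k.factorial : ℂ))
          = ph (-(n : ℂ)) k * ph x k / (ph z k * (k.factorial : ℂ))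
            - (k : ℂ) * ph (-(n : ℂ)) (k - 1) * ph x k / (ph z k * (k.factorial : ℂ)) := by
      intro k _
      rcases k with _ | j
      · simp [ph_zero]
      · have e1 : ph (-((n : ℂ) + 1)) (j + 1) = (-(n : ℂ) - 1) * ph (-(n : ℂ)) j := by
          rw [ph_one_add]; ring_nf
        have e2 : ph (-(n : ℂ)) (j + 1) = ph (-(n : ℂ)) j * (-(n : ℂ) + j) := ph_succ _ _
        rw [e1, e2]
        simp only [Nat.add_sub_cancel]
        rw [← sub_div]
        congr 1
        push_cast
        ring
    have hcast : (-(((n : ℕ) + 1 : ℕ) : ℂ)) = -((n : ℂ) + 1) := by push_cast; ring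
    rw [show ((n:ℕ)+1+1 : ℕ) = n + 2 from rfl]
    calc ∑ k ∈ Finset.range (n + 2), ph (-(((n:ℕ)+1 : ℕ) : ℂ)) k * ph x k / (ph z k * (k.factorial : ℂ))
        = ∑ k ∈ Finset.range (n + 2), (ph (-(n : ℂ)) k * ph x k / (ph z k * (k.factorial : ℂ))
            - (k : ℂ) * ph (-(n : ℂ)) (k - 1) * ph x k / (ph z k * (k.factorial : ℂ))) := by
          rw [show (-(((n : ℕ) + 1 : ℕ) : ℂ)) = -((n : ℂ) + 1) from by push_cast; ring]
          exact Finset.sum_congr rfl split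
      _ = (∑ k ∈ Finset.range (n + 2), ph (-(n : ℂ)) k * ph x k / (ph z k * (k.factorial : ℂ)))
            - ∑ k ∈ Finset.range (n + 2), (k : ℂ) * ph (-(n : ℂ)) (k - 1) * ph x k / (ph z k * (k.factorial : ℂ)) := by
          rw [Finset.sum_sub_distrib]
      _ = ph (z - x) n / ph z n - (x / z) * (ph (z - x) n / ph (z + 1) n) := by
          congr 1
          · rw [Finset.sum_range_succ, ph_nat_eq_zero (by omega)]
            simp only [zero_mul, zero_div, add_zero]
            exact IH x z hzn
          · rw [Finset.sum_range_succ']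
            simp only [Nat.cast_zero, zero_mul, zero_div, add_zero]
            have hterm : ∀ j ∈ Finset.range (n + 1),
                ((j + 1 : ℕ) : ℂ) * ph (-(n : ℂ)) ((j + 1) - 1) * ph x (j + 1)
                    / (ph z (j + 1) * (((j + 1).factorial : ℕ) : ℂ))
                  = (x / z) * (ph (-(n : ℂ)) j * ph (x + 1) j / (ph (z + 1) j * (j.factorial : ℂ))) := by
              intro j hj
              have hj' : j < n + 1 := Finset.mem_range.mp hj
              have hzj : ph (z + 1) j ≠ 0 := ph_ne_zero_of_le (by omega) hz1n
              simp only [Nat.add_sub_cancel]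
              rw [ph_one_add x j, ph_one_add z j, Nat.factorial_succ]
              have hfj : (j.factorial : ℂ) ≠ 0 := fact_ne_zero j
              have hj1 : (j : ℂ) + 1 ≠ 0 := Nat.cast_add_one_ne_zero j
              push_cast
              field_simp
            rw [Finset.sum_congr rfl hterm, ← Finset.mul_sum]
            have := IH (x + 1) (z + 1) hz1n
            rw [this]
            congr 2
            ring
      _ = ph (z - x) (n + 1) / ph z (n + 1) := by
          have key : ph z (n + 1) = z * ph (z + 1) n := ph_one_add z n
          have key2 : ph z (n + 1) = ph z n * (z + n) := ph_succ z n
          have key3 : ph (z - x) (n + 1) = ph (z - x) n * (z - x + n) := ph_succ _ n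
          have hrel : z * ph (z + 1) n = ph z n * (z + n) := by rw [← key, key2]
          have hzn2 : z + n ≠ 0 := by
            intro h
            exact hz (by rw [ph_succ, h, mul_zero])
          have e : x / z * (ph (z - x) n / ph (z + 1) n)
              = x * ph (z - x) n / (z * ph (z + 1) n) := div_mul_div_comm x z _ _
          rw [e, hrel, key3, key2]
          field_simp
          ring

lemma ph_neg_cast (k : ℕ) : ∀ j ≤ k, ph (-(k : ℂ)) j * (((k - j).factorial : ℕ) : ℂ)
    = (-1) ^ j * (k.factorial : ℂ) := by
  intro j
  induction j with
  | zero => simp [ph_zero]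
  | succ j IHj =>
    intro hj
    have hj' : j ≤ k := by omega
    have hkj : (((k - j) : ℕ) : ℂ) ≠ 0 := by
      have : k - j ≠ 0 := by omega
      exact_mod_cast this
    apply mul_right_cancel₀ hkj
    have e1 : ph (-(k : ℂ)) (j + 1) = ph (-(k : ℂ)) j * (-(k : ℂ) + j) := ph_succ _ _
    have e2 : (k - j).factorial = (k - j) * (k - (j + 1)).factorial := by
      have : k - j = (k - (j + 1)) + 1 := by omega
      rw [this, Nat.factorial_succ]
    have e3 : (-(k : ℂ) + j) = -(((k - j : ℕ) : ℂ)) := by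
      rw [Nat.cast_sub hj']; ring
    calc ph (-(k : ℂ)) (j + 1) * (((k - (j + 1)).factorial : ℕ) : ℂ) * ((k - j : ℕ) : ℂ)
        = (ph (-(k : ℂ)) j * (((k - j).factorial : ℕ) : ℂ)) * (-(k : ℂ) + j) := by
          rw [e1, e2]; push_cast; ring
      _ = (-1) ^ j * (k.factorial : ℂ) * (-(((k - j : ℕ) : ℂ))) := by rw [IHj hj', e3]
      _ = (-1) ^ (j + 1) * (k.factorial : ℂ) * ((k - j : ℕ) : ℂ) := by ring

lemma saalschuetz (n : ℕ) (x y z : ℂ) (hz : ph z n ≠ 0)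
    (hw : ph (1 + x + y - z - n) n ≠ 0) :
    ∑ k ∈ Finset.range (n + 1),
        ph (-(n : ℂ)) k * ph x k * ph y k /
          ((k.factorial : ℂ) * ph z k * ph (1 + x + y - z - n) k)
      = ph (z - x) n * ph (z - y) n / (ph z n * ph (z - x - y) n) := by
  set w : ℂ := 1 + x + y - z - n with hw_def
  set u : ℂ := 1 + x - z - n with hu_def
  have hwu : w - u = y := by rw [hw_def, hu_def]; ring
  set G : ℕ → ℕ → ℂ := fun k j =>
    ph (-(n : ℂ)) k * ph x k / (ph z k * (k.factorial : ℂ)) *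
      (ph (-(k : ℂ)) j * ph u j / (ph w j * (j.factorial : ℂ))) with hG_def
  have step1 : ∀ k ∈ Finset.range (n + 1),
      ph (-(n : ℂ)) k * ph x k * ph y k /
          ((k.factorial : ℂ) * ph z k * ph w k)
        = ∑ j ∈ Finset.range (n + 1), G k j := by
    intro k hk
    have hk' : k ≤ n := by have := Finset.mem_range.mp hk; omega
    have hwk : ph w k ≠ 0 := ph_ne_zero_of_le hk' hw
    have hext : ∑ j ∈ Finset.range (k + 1),
        ph (-(k : ℂ)) j * ph u j / (ph w j * (j.factorial : ℂ))
        = ∑ j ∈ Finset.range (n + 1),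
        ph (-(k : ℂ)) j * ph u j / (ph w j * (j.factorial : ℂ)) := by
      refine Finset.sum_subset ?_ ?_
      · intro t ht
        simp only [Finset.mem_range] at *
        omega
      · intro t _ ht
        have : k < t := by simp only [Finset.mem_range] at ht ⊢; omega
        rw [ph_nat_eq_zero this]
        simp
    have inner : ∑ j ∈ Finset.range (n + 1),
        ph (-(k : ℂ)) j * ph u j / (ph w j * (j.factorial : ℂ)) = ph y k / ph w k := by
      rw [← hext, vandermonde k u w hwk, hwu]
    simp only [hG_def]
    rw [← Finset.mul_sum, inner]
    ring
  have step2 : ∀ j ∈ Finset.range (n + 1),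
      ∑ k ∈ Finset.range (n + 1), G k j
        = (ph (z - x) n / ph z n) *
            (ph (-(n : ℂ)) j * ph x j / (ph w j * (j.factorial : ℂ))) := by
    intro j hj
    have hjn : j ≤ n := by have := Finset.mem_range.mp hj; omega
    have hwj : ph w j ≠ 0 := ph_ne_zero_of_le hjn hw
    have hzj : ph z j ≠ 0 := ph_ne_zero_of_le hjn hz
    have hzjn : ph (z + j) (n - j) ≠ 0 := ph_shift_ne_zero hz (by omega)
    have e1 : ∑ k ∈ Finset.range (n + 1), G k j
        = ∑ k ∈ Finset.Ico j (n + 1), G k j := by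
      refine (Finset.sum_subset ?_ ?_).symm
      · intro t ht
        simp only [Finset.mem_Ico] at ht
        simp only [Finset.mem_range]
        omega
      · intro t ht ht'
        have : t < j := by
          simp only [Finset.mem_range] at ht
          simp only [Finset.mem_Ico] at ht'
          omega
        simp only [hG_def, ph_nat_eq_zero this]
        simp
    have e2 : ∑ k ∈ Finset.Ico j (n + 1), G k j
        = ∑ i ∈ Finset.range (n + 1 - j), G (j + i) j := by
      rw [Finset.sum_Ico_eq_sum_range]
    have e3 : ∀ i ∈ Finset.range (n + 1 - j),
        G (j + i) j
          = (ph (-(n : ℂ)) j * ph x j * ph u j * (-1) ^ j /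
              (ph z j * ph w j * (j.factorial : ℂ))) *
            (ph (-((n - j : ℕ) : ℂ)) i * ph (x + j) i /
              (ph (z + j) i * (i.factorial : ℂ))) := by
      intro i hi
      have hij : j + i ≤ n := by have := Finset.mem_range.mp hi; omega
      have hneg : ph (-((j + i : ℕ) : ℂ)) j * ((i.factorial : ℕ) : ℂ)
          = (-1) ^ j * (((j + i).factorial : ℕ) : ℂ) := by
        have := ph_neg_cast (j + i) j (by omega)
        rwa [show j + i - j = i by omega] at this
      have hcast : (-((n - j : ℕ) : ℂ)) = -(n : ℂ) + j := by
        rw [Nat.cast_sub hjn]; ring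
      have hzji : ph (z + j) i ≠ 0 := ph_shift_ne_zero hz (by omega)
      simp only [hG_def]
      rw [ph_add (-(n : ℂ)) j i, ph_add x j i, ph_add z j i, hcast]
      have hfi : ((i.factorial : ℕ) : ℂ) ≠ 0 := fact_ne_zero i
      have hfj : ((j.factorial : ℕ) : ℂ) ≠ 0 := fact_ne_zero j
      have hfji : (((j + i).factorial : ℕ) : ℂ) ≠ 0 := fact_ne_zero (j + i)
      have hneg' : ph (-((j + i : ℕ) : ℂ)) j
          = (-1) ^ j * (((j + i).factorial : ℕ) : ℂ) / ((i.factorial : ℕ) : ℂ) := by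
        rw [eq_div_iff hfi]
        exact hneg
      rw [hneg']
      push_cast
      field_simp
    rw [e1, e2, Finset.sum_congr rfl e3, ← Finset.mul_sum]
    have hrange : n + 1 - j = (n - j) + 1 := by omega
    rw [hrange, vandermonde (n - j) (x + j) (z + j) hzjn]
    have harg : z + (j : ℂ) - (x + (j : ℂ)) = z - x := by ring
    rw [harg]
    -- now the per-j closed form
    have A1 : ph z j * ph (z + j) (n - j) = ph z n := by
      rw [← ph_add, show j + (n - j) = n by omega]
    have A2 : ph (z - x) n = ph (z - x) (n - j) * ph (z - x + (n - j : ℕ)) j := by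
      rw [← ph_add, show (n - j) + j = n by omega]
    have A3 : ph (z - x + ((n - j : ℕ) : ℂ)) j = (-1) ^ j * ph u j := by
      rw [← ph_reflect u j]
      congr 1
      rw [hu_def, Nat.cast_sub hjn]
      ring
    rw [A2, A3, ← A1]
    field_simp
  calc ∑ k ∈ Finset.range (n + 1),
        ph (-(n : ℂ)) k * ph x k * ph y k /
          ((k.factorial : ℂ) * ph z k * ph w k)
      = ∑ k ∈ Finset.range (n + 1), ∑ j ∈ Finset.range (n + 1), G k j :=
        Finset.sum_congr rfl step1
    _ = ∑ j ∈ Finset.range (n + 1), ∑ k ∈ Finset.range (n + 1), G k j := Finset.sum_comm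
    _ = ∑ j ∈ Finset.range (n + 1), (ph (z - x) n / ph z n) *
            (ph (-(n : ℂ)) j * ph x j / (ph w j * (j.factorial : ℂ))) :=
        Finset.sum_congr rfl step2
    _ = (ph (z - x) n / ph z n) * (ph (w - x) n / ph w n) := by
        rw [← Finset.mul_sum, vandermonde n x w hw]
    _ = ph (z - x) n * ph (z - y) n / (ph z n * ph (z - x - y) n) := by
        have B1 : ph (w - x) n = (-1) ^ n * ph (z - y) n := by
          rw [← ph_reflect (z - y) n]
          congr 1
          rw [hw_def]; ring
        have B2 : ph w n = (-1) ^ n * ph (z - x - y) n := by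
          rw [← ph_reflect (z - x - y) n]
          congr 1
          rw [hw_def]; ring
        rw [B1, B2, div_mul_div_comm]
        have hne : ((-1 : ℂ)) ^ n ≠ 0 := pow_ne_zero n (by norm_num)
        rw [show ph (z - x) n * ((-1 : ℂ) ^ n * ph (z - y) n)
            = (-1 : ℂ) ^ n * (ph (z - x) n * ph (z - y) n) by ring,
          show ph z n * ((-1 : ℂ) ^ n * ph (z - x - y) n)
            = (-1 : ℂ) ^ n * (ph z n * ph (z - x - y) n) by ring,
          mul_div_mul_left _ _ hne]

lemma ph_split_factor (a : ℂ) (r : ℕ) :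
    (a + 2 * r) * ph a r = a * ph (a + 1) r + r * ph a r := by
  have h1 := ph_succ a r
  have h2 := ph_one_add a r
  have h3 : a * ph (a + 1) r = ph a r * (a + r) := by rw [← h2, h1]
  linear_combination (-1 : ℂ) * h3

lemma orth (n : ℕ) (a : ℂ) (h : ph (1 + a) (2 * n) ≠ 0) :
    ∑ r ∈ Finset.range (n + 1), (-1) ^ r * (a + 2 * r) * ph a r /
        ((r.factorial : ℂ) * (((n - r).factorial : ℕ) : ℂ) * ph (1 + a) (n + r))
      = if n = 0 then a else 0 := by
  rcases n with _ | m
  · simp [ph_zero]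
  rw [if_neg (Nat.succ_ne_zero m)]
  have hpan : ph (1 + a + ((m + 1 : ℕ) : ℂ)) (m + 1) ≠ 0 :=
    ph_shift_ne_zero h (by omega)
  have h1an : (1 : ℂ) + a + ((m + 1 : ℕ) : ℂ) ≠ 0 := by
    have := ph_shift_ne_zero h (m := m + 1) (k := 1) (by omega)
    rwa [ph_one] at this
  have hpan' : ph (1 + a + ((m + 1 : ℕ) : ℂ) + 1) m ≠ 0 := by
    have := ph_shift_ne_zero h (m := m + 2) (k := m) (by omega)
    rwa [show ((1 : ℂ) + a + ((m + 2 : ℕ) : ℂ)) = 1 + a + ((m + 1 : ℕ) : ℂ) + 1 by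
      push_cast; ring] at this
  have hfn : (((m + 1).factorial : ℕ) : ℂ) ≠ 0 := fact_ne_zero (m + 1)
  have hpn : ph (1 + a) (m + 1) ≠ 0 := ph_ne_zero_of_le (by omega) h
  have main : ∑ r ∈ Finset.range (m + 1 + 1),
      (a + 2 * r) * ph a r * ph (-((m + 1 : ℕ) : ℂ)) r /
        ((r.factorial : ℂ) * ph (1 + a + ((m + 1 : ℕ) : ℂ)) r) = 0 := by
    have split : ∀ r ∈ Finset.range (m + 1 + 1),
        (a + 2 * r) * ph a r * ph (-((m + 1 : ℕ) : ℂ)) r /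
            ((r.factorial : ℂ) * ph (1 + a + ((m + 1 : ℕ) : ℂ)) r)
          = a * (ph (-((m + 1 : ℕ) : ℂ)) r * ph (a + 1) r /
              (ph (1 + a + ((m + 1 : ℕ) : ℂ)) r * (r.factorial : ℂ)))
            + (r : ℂ) * ph a r * ph (-((m + 1 : ℕ) : ℂ)) r /
              ((r.factorial : ℂ) * ph (1 + a + ((m + 1 : ℕ) : ℂ)) r) := by
      intro r _
      rw [show (a + 2 * r) * ph a r * ph (-((m + 1 : ℕ) : ℂ)) r
          = (a * ph (a + 1) r + r * ph a r) * ph (-((m + 1 : ℕ) : ℂ)) r by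
        rw [← ph_split_factor]]
      ring
    rw [Finset.sum_congr rfl split, Finset.sum_add_distrib, ← Finset.mul_sum]
    have V1 : ∑ r ∈ Finset.range (m + 1 + 1),
        ph (-((m + 1 : ℕ) : ℂ)) r * ph (a + 1) r /
          (ph (1 + a + ((m + 1 : ℕ) : ℂ)) r * (r.factorial : ℂ))
          = ph (((m + 1 : ℕ) : ℂ)) (m + 1) / ph (1 + a + ((m + 1 : ℕ) : ℂ)) (m + 1) := by
      rw [vandermonde (m + 1) (a + 1) (1 + a + ((m + 1 : ℕ) : ℂ)) hpan]
      congr 2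
      ring
    have V2 : ∑ r ∈ Finset.range (m + 1 + 1),
        (r : ℂ) * ph a r * ph (-((m + 1 : ℕ) : ℂ)) r /
          ((r.factorial : ℂ) * ph (1 + a + ((m + 1 : ℕ) : ℂ)) r)
          = a * (-((m + 1 : ℕ) : ℂ)) / (1 + a + ((m + 1 : ℕ) : ℂ)) *
            (ph (((m + 1 : ℕ) : ℂ) + 1) m / ph (1 + a + ((m + 1 : ℕ) : ℂ) + 1) m) := by
      rw [Finset.sum_range_succ']
      have t0 : ((0 : ℕ) : ℂ) * ph a 0 * ph (-((m + 1 : ℕ) : ℂ)) 0 /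
          (((Nat.factorial 0 : ℕ) : ℂ) * ph (1 + a + ((m + 1 : ℕ) : ℂ)) 0) = 0 := by simp
      rw [t0, add_zero]
      have tterm : ∀ s ∈ Finset.range (m + 1),
          ((s + 1 : ℕ) : ℂ) * ph a (s + 1) * ph (-((m + 1 : ℕ) : ℂ)) (s + 1) /
              ((((s + 1).factorial : ℕ) : ℂ) * ph (1 + a + ((m + 1 : ℕ) : ℂ)) (s + 1))
            = (a * (-((m + 1 : ℕ) : ℂ)) / (1 + a + ((m + 1 : ℕ) : ℂ))) *
              (ph (-(m : ℂ)) s * ph (a + 1) s /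
                (ph (1 + a + ((m + 1 : ℕ) : ℂ) + 1) s * (s.factorial : ℂ))) := by
        intro s hs
        have hsm : s ≤ m := by have := Finset.mem_range.mp hs; omega
        have hfs : ((s.factorial : ℕ) : ℂ) ≠ 0 := fact_ne_zero s
        have hs1 : ((s + 1 : ℕ) : ℂ) ≠ 0 := by exact_mod_cast Nat.succ_ne_zero s
        have hps : ph (1 + a + ((m + 1 : ℕ) : ℂ) + 1) s ≠ 0 := ph_ne_zero_of_le hsm hpan'
        rw [ph_one_add a s, ph_one_add (-((m + 1 : ℕ) : ℂ)) s,
          ph_one_add (1 + a + ((m + 1 : ℕ) : ℂ)) s, Nat.factorial_succ, Nat.cast_mul,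
          show (-((m + 1 : ℕ) : ℂ) + 1) = -(m : ℂ) by push_cast; ring,
          div_mul_div_comm,
          div_eq_div_iff
            (mul_ne_zero (mul_ne_zero hs1 hfs) (mul_ne_zero h1an hps))
            (mul_ne_zero h1an (mul_ne_zero hps hfs))]
        ring
      rw [Finset.sum_congr rfl tterm, ← Finset.mul_sum]
      congr 1
      rw [vandermonde m (a + 1) (1 + a + ((m + 1 : ℕ) : ℂ) + 1) hpan']
      congr 2
      ring
    rw [V1, V2]
    have e1 : ph (((m + 1 : ℕ) : ℂ)) (m + 1) = ((m + 1 : ℕ) : ℂ) * ph (((m + 1 : ℕ) : ℂ) + 1) m :=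
      ph_one_add _ m
    have e2 : ph (1 + a + ((m + 1 : ℕ) : ℂ)) (m + 1)
        = (1 + a + ((m + 1 : ℕ) : ℂ)) * ph (1 + a + ((m + 1 : ℕ) : ℂ) + 1) m := ph_one_add _ m
    rw [e1, e2, div_mul_eq_div_div]
    ring
  have key : ∀ r ∈ Finset.range (m + 1 + 1),
      (-1) ^ r * (a + 2 * r) * ph a r /
          ((r.factorial : ℂ) * (((m + 1 - r).factorial : ℕ) : ℂ) * ph (1 + a) (m + 1 + r))
        * ((((m + 1).factorial : ℕ) : ℂ) * ph (1 + a) (m + 1))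
      = (a + 2 * r) * ph a r * ph (-((m + 1 : ℕ) : ℂ)) r /
          ((r.factorial : ℂ) * ph (1 + a + ((m + 1 : ℕ) : ℂ)) r) := by
    intro r hr
    have hrn : r ≤ m + 1 := by have := Finset.mem_range.mp hr; omega
    have hfr : ((r.factorial : ℕ) : ℂ) ≠ 0 := fact_ne_zero r
    have hfnr : (((m + 1 - r).factorial : ℕ) : ℂ) ≠ 0 := fact_ne_zero _
    have hpar : ph (1 + a + ((m + 1 : ℕ) : ℂ)) r ≠ 0 := ph_shift_ne_zero h (by omega)
    have hneg0 : ph (-((m + 1 : ℕ) : ℂ)) r * (((m + 1 - r).factorial : ℕ) : ℂ)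
        = (-1) ^ r * (((m + 1).factorial : ℕ) : ℂ) := ph_neg_cast (m + 1) r hrn
    rw [ph_add (1 + a) (m + 1) r, div_mul_eq_mul_div,
      div_eq_div_iff
        (mul_ne_zero (mul_ne_zero hfr hfnr) (mul_ne_zero hpn hpar))
        (mul_ne_zero hfr hpar)]
    linear_combination (-((a + 2 * (r : ℂ)) * ph a r * (r.factorial : ℂ) *
      ph (1 + a) (m + 1) * ph (1 + a + ((m + 1 : ℕ) : ℂ)) r)) * hneg0
  have S0 : (∑ r ∈ Finset.range (m + 1 + 1),
      (-1) ^ r * (a + 2 * r) * ph a r /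
        ((r.factorial : ℂ) * (((m + 1 - r).factorial : ℕ) : ℂ) * ph (1 + a) (m + 1 + r)))
      * ((((m + 1).factorial : ℕ) : ℂ) * ph (1 + a) (m + 1)) = 0 := by
    rw [Finset.sum_mul, Finset.sum_congr rfl key, main]
  rcases mul_eq_zero.mp S0 with h' | h'
  · exact h'
  · exact absurd h' (mul_ne_zero hfn hpn)

lemma L4claimA (m r : ℕ) (a b c : ℂ) (hr : r ≤ m)
    (ha : ph (1 + a) (2 * m) ≠ 0) (hb : ph (1 + a - b) m ≠ 0)
    (hc : ph (1 + a - c) m ≠ 0) (hbc : ph (1 + a - b - c) m ≠ 0) :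
    ∑ j ∈ Finset.Ico r (m + 1),
      (-1) ^ r * (a + 2 * r) * ph a r * ph b j * ph c j * ph (1 + a - b - c) (m - j) /
        ((r.factorial : ℂ) * (((m - j).factorial : ℕ) : ℂ) * (((j - r).factorial : ℕ) : ℂ) *
          ph (1 + a) (j + r) * ph (1 + a - b) m * ph (1 + a - c) m)
    = (-1) ^ r * (a + 2 * r) * ph a r * ph b r * ph c r /
        ((r.factorial : ℂ) * ph (1 + a - b) r * ph (1 + a - c) r *
          (((m - r).factorial : ℕ) : ℂ) * ph (1 + a) (m + r)) := by
  set w₂ : ℂ := 1 + (b + r) + (c + r) - (1 + a + 2 * r) - ((m - r : ℕ) : ℂ) with hw2_def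
  have hbcr : ph (1 + a - b - c) (m - r) ≠ 0 := ph_ne_zero_of_le (by omega) hbc
  have hbcrefl : ph (1 + a - b - c) (m - r) = (-1) ^ (m - r) * ph w₂ (m - r) := by
    rw [← ph_reflect w₂ (m - r)]
    congr 1
    rw [hw2_def]; ring
  have hw2 : ph w₂ (m - r) ≠ 0 := by
    intro h0
    exact hbcr (by rw [hbcrefl, h0, mul_zero])
  have hz2 : ph (1 + a + 2 * (r : ℂ)) (m - r) ≠ 0 := by
    have := ph_shift_ne_zero ha (m := 2 * r) (k := m - r) (by omega)
    rwa [show ((2 * r : ℕ) : ℂ) = 2 * (r : ℂ) by push_cast; ring] at this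
  have hD : ∀ i ∈ Finset.range (m + 1 - r),
      (fun j => (-1) ^ r * (a + 2 * r) * ph a r * ph b j * ph c j * ph (1 + a - b - c) (m - j) /
        ((r.factorial : ℂ) * (((m - j).factorial : ℕ) : ℂ) * (((j - r).factorial : ℕ) : ℂ) *
          ph (1 + a) (j + r) * ph (1 + a - b) m * ph (1 + a - c) m)) (r + i)
      = ((-1) ^ r * (a + 2 * r) * ph a r * ph b r * ph c r * ph (1 + a - b - c) (m - r) /
          ((r.factorial : ℂ) * (((m - r).factorial : ℕ) : ℂ) * ph (1 + a) (2 * r) *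
            ph (1 + a - b) m * ph (1 + a - c) m)) *
        (ph (-((m - r : ℕ) : ℂ)) i * ph (b + r) i * ph (c + r) i /
          ((i.factorial : ℂ) * ph (1 + a + 2 * (r : ℂ)) i * ph w₂ i)) := by
    intro i hi
    have him : r + i ≤ m := by have := Finset.mem_range.mp hi; omega
    simp only []
    rw [show r + i - r = i by omega]
    have R1 : ph b (r + i) = ph b r * ph (b + r) i := ph_add b r i
    have R2 : ph c (r + i) = ph c r * ph (c + r) i := ph_add c r i
    have R6 : ph (1 + a) (r + i + r) = ph (1 + a) (2 * r) * ph (1 + a + 2 * (r : ℂ)) i := by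
      rw [show r + i + r = 2 * r + i by omega, ph_add]
      congr 2
      push_cast; ring
    have s1 : ph (1 + a - b - c) (m - r)
        = ph (1 + a - b - c) (m - (r + i)) * ph (1 + a - b - c + ((m - (r + i) : ℕ) : ℂ)) i := by
      have := ph_add (1 + a - b - c) (m - (r + i)) i
      rwa [show (m - (r + i)) + i = m - r by omega] at this
    have s2 : ph (1 + a - b - c + ((m - (r + i) : ℕ) : ℂ)) i = (-1) ^ i * ph w₂ i := by
      rw [← ph_reflect w₂ i]
      congr 1
      rw [hw2_def, Nat.cast_sub (by omega : r + i ≤ m), Nat.cast_sub (by omega : r ≤ m)]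
      push_cast; ring
    have Rc : ph (1 + a - b - c) (m - r)
        = (-1) ^ i * (ph (1 + a - b - c) (m - (r + i)) * ph w₂ i) := by
      rw [s1, s2]; ring
    have R5 : ph (-((m - r : ℕ) : ℂ)) i * (((m - (r + i)).factorial : ℕ) : ℂ)
        = (-1) ^ i * (((m - r).factorial : ℕ) : ℂ) := by
      have := ph_neg_cast (m - r) i (by omega)
      rwa [show m - r - i = m - (r + i) by omega] at this
    have Rfull : ph (1 + a - b - c) (m - r) * (ph (-((m - r : ℕ) : ℂ)) i * (((m - (r + i)).factorial : ℕ) : ℂ))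
        = ph (1 + a - b - c) (m - (r + i)) * ph w₂ i * (((m - r).factorial : ℕ) : ℂ) := by
      rw [Rc, R5, show ((-1 : ℂ) ^ i * (ph (1 + a - b - c) (m - (r + i)) * ph w₂ i)) *
          ((-1 : ℂ) ^ i * (((m - r).factorial : ℕ) : ℂ))
          = ((-1 : ℂ) * -1) ^ i * (ph (1 + a - b - c) (m - (r + i)) * ph w₂ i *
            (((m - r).factorial : ℕ) : ℂ)) by rw [mul_pow]; ring]
      norm_num
    have hfr : ((r.factorial : ℕ) : ℂ) ≠ 0 := fact_ne_zero r
    have hfi : ((i.factorial : ℕ) : ℂ) ≠ 0 := fact_ne_zero i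
    have hfmr : (((m - r).factorial : ℕ) : ℂ) ≠ 0 := fact_ne_zero _
    have hfmri : (((m - (r + i)).factorial : ℕ) : ℂ) ≠ 0 := fact_ne_zero _
    have hz2i : ph (1 + a + 2 * (r : ℂ)) i ≠ 0 := ph_ne_zero_of_le (by omega) hz2
    have hw2i : ph w₂ i ≠ 0 := ph_ne_zero_of_le (by omega) hw2
    have hp2r : ph (1 + a) (2 * r) ≠ 0 := ph_ne_zero_of_le (by omega) ha
    have hpbm : ph (1 + a - b) m ≠ 0 := hb
    have hpcm : ph (1 + a - c) m ≠ 0 := hc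
    rw [R1, R2, R6, div_mul_div_comm,
      div_eq_div_iff
        (mul_ne_zero (mul_ne_zero (mul_ne_zero (mul_ne_zero (mul_ne_zero hfr hfmri) hfi)
          (mul_ne_zero hp2r hz2i)) hpbm) hpcm)
        (mul_ne_zero (mul_ne_zero (mul_ne_zero (mul_ne_zero (mul_ne_zero hfr hfmr) hp2r)
          hpbm) hpcm) (mul_ne_zero (mul_ne_zero hfi hz2i) hw2i))]
    linear_combination (-((-1 : ℂ) ^ r * (a + 2 * r) * ph a r * ph b r * ph (b + r) i *
      ph c r * ph (c + r) i * (r.factorial : ℂ) * (i.factorial : ℂ) *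
      ph (1 + a) (2 * r) * ph (1 + a + 2 * (r : ℂ)) i *
      ph (1 + a - b) m * ph (1 + a - c) m)) * Rfull
  rw [Finset.sum_Ico_eq_sum_range, Finset.sum_congr rfl hD, ← Finset.mul_sum]
  rw [show m + 1 - r = (m - r) + 1 by omega]
  rw [saalschuetz (m - r) (b + r) (c + r) (1 + a + 2 * (r : ℂ)) hz2 hw2]
  -- final algebra
  have A1 : ph (1 + a - b) m = ph (1 + a - b) r * ph (1 + a - b + r) (m - r) := by
    have := ph_add (1 + a - b) r (m - r)
    rwa [show r + (m - r) = m by omega] at this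
  have A2 : ph (1 + a - c) m = ph (1 + a - c) r * ph (1 + a - c + r) (m - r) := by
    have := ph_add (1 + a - c) r (m - r)
    rwa [show r + (m - r) = m by omega] at this
  have A3 : ph (1 + a) (m + r) = ph (1 + a) (2 * r) * ph (1 + a + 2 * (r : ℂ)) (m - r) := by
    have := ph_add (1 + a) (2 * r) (m - r)
    rw [show 2 * r + (m - r) = m + r by omega] at this
    rw [this]
    congr 2
    push_cast; ring
  rw [show (1 : ℂ) + a + 2 * r - (b + r) - (c + r) = 1 + a - b - c by ring,
    show (1 : ℂ) + a + 2 * r - (b + r) = 1 + a - b + r by ring,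
    show (1 : ℂ) + a + 2 * r - (c + r) = 1 + a - c + r by ring,
    A1, A2, A3]
  have hpbr : ph (1 + a - b) r ≠ 0 := ph_ne_zero_of_le hr hb
  have hpcr : ph (1 + a - c) r ≠ 0 := ph_ne_zero_of_le hr hc
  have hpbmr : ph (1 + a - b + r) (m - r) ≠ 0 := by
    intro h0; exact hb (by rw [A1, h0, mul_zero])
  have hpcmr : ph (1 + a - c + r) (m - r) ≠ 0 := by
    intro h0; exact hc (by rw [A2, h0, mul_zero])
  have hfr : ((r.factorial : ℕ) : ℂ) ≠ 0 := fact_ne_zero r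
  have hfmr : (((m - r).factorial : ℕ) : ℂ) ≠ 0 := fact_ne_zero _
  have hp2r : ph (1 + a) (2 * r) ≠ 0 := ph_ne_zero_of_le (by omega) ha
  rw [div_mul_div_comm, div_eq_div_iff
    (mul_ne_zero (mul_ne_zero (mul_ne_zero (mul_ne_zero (mul_ne_zero hfr hfmr) hp2r)
      (mul_ne_zero hpbr hpbmr)) (mul_ne_zero hpcr hpcmr)) (mul_ne_zero hz2 hbcr))
    (mul_ne_zero (mul_ne_zero (mul_ne_zero (mul_ne_zero hfr hpbr) hpcr) hfmr)
      (mul_ne_zero hp2r hz2))]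
  ring

lemma L4 (m : ℕ) (a b c : ℂ)
    (ha : ph (1 + a) (2 * m) ≠ 0) (hb : ph (1 + a - b) m ≠ 0)
    (hc : ph (1 + a - c) m ≠ 0) (hbc : ph (1 + a - b - c) m ≠ 0) :
    ∑ r ∈ Finset.range (m + 1),
      (-1) ^ r * (a + 2 * r) * ph a r * ph b r * ph c r /
        ((r.factorial : ℂ) * ph (1 + a - b) r * ph (1 + a - c) r *
          (((m - r).factorial : ℕ) : ℂ) * ph (1 + a) (m + r))
    = a * ph (1 + a - b - c) m /
        (((m.factorial : ℕ) : ℂ) * ph (1 + a - b) m * ph (1 + a - c) m) := by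
  have expand : ∀ r ∈ Finset.range (m + 1),
      (-1) ^ r * (a + 2 * r) * ph a r * ph b r * ph c r /
        ((r.factorial : ℂ) * ph (1 + a - b) r * ph (1 + a - c) r *
          (((m - r).factorial : ℕ) : ℂ) * ph (1 + a) (m + r))
      = ∑ j ∈ Finset.Ico r (m + 1),
        (-1) ^ r * (a + 2 * r) * ph a r * ph b j * ph c j * ph (1 + a - b - c) (m - j) /
          ((r.factorial : ℂ) * (((m - j).factorial : ℕ) : ℂ) * (((j - r).factorial : ℕ) : ℂ) *
            ph (1 + a) (j + r) * ph (1 + a - b) m * ph (1 + a - c) m) := by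
    intro r hr
    exact (L4claimA m r a b c (by have := Finset.mem_range.mp hr; omega) ha hb hc hbc).symm
  rw [Finset.sum_congr rfl expand, Finset.range_eq_Ico, Finset.sum_Ico_Ico_comm]
  simp only [← Finset.range_eq_Ico]
  have inner : ∀ j ∈ Finset.range (m + 1),
      ∑ r ∈ Finset.range (j + 1),
        (-1) ^ r * (a + 2 * r) * ph a r * ph b j * ph c j * ph (1 + a - b - c) (m - j) /
          ((r.factorial : ℂ) * (((m - j).factorial : ℕ) : ℂ) * (((j - r).factorial : ℕ) : ℂ) *
            ph (1 + a) (j + r) * ph (1 + a - b) m * ph (1 + a - c) m)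
      = (ph b j * ph c j * ph (1 + a - b - c) (m - j) /
          ((((m - j).factorial : ℕ) : ℂ) * ph (1 + a - b) m * ph (1 + a - c) m)) *
        (if j = 0 then a else 0) := by
    intro j hj
    have hjm : j ≤ m := by have := Finset.mem_range.mp hj; omega
    have pull : ∀ r ∈ Finset.range (j + 1),
        (-1) ^ r * (a + 2 * r) * ph a r * ph b j * ph c j * ph (1 + a - b - c) (m - j) /
          ((r.factorial : ℂ) * (((m - j).factorial : ℕ) : ℂ) * (((j - r).factorial : ℕ) : ℂ) *
            ph (1 + a) (j + r) * ph (1 + a - b) m * ph (1 + a - c) m)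
        = (ph b j * ph c j * ph (1 + a - b - c) (m - j) /
            ((((m - j).factorial : ℕ) : ℂ) * ph (1 + a - b) m * ph (1 + a - c) m)) *
          ((-1) ^ r * (a + 2 * r) * ph a r /
            ((r.factorial : ℂ) * (((j - r).factorial : ℕ) : ℂ) * ph (1 + a) (j + r))) := by
      intro r _
      ring
    rw [Finset.sum_congr rfl pull, ← Finset.mul_sum,
      orth j a (ph_ne_zero_of_le (by omega) ha)]
  rw [Finset.sum_congr rfl inner]
  simp only [mul_ite, mul_zero]
  rw [Finset.sum_ite_eq' (Finset.range (m + 1)) 0]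
  rw [if_pos (Finset.mem_range.mpr (by omega))]
  simp only [ph_zero, Nat.sub_zero]
  ring

lemma L5 (N r : ℕ) (a d e : ℂ) (hr : r ≤ N)
    (ha : ph (1 + a) (2 * N) ≠ 0) (hde : ph (d + e - a - (N : ℂ)) N ≠ 0) :
    ∑ m ∈ Finset.Ico r (N + 1),
      ph d m * ph e m * ph (-(N : ℂ)) m /
        (ph (d + e - a - (N : ℂ)) m * (((m - r).factorial : ℕ) : ℂ) * ph (1 + a) (m + r))
    = ph d r * ph e r * ph (-(N : ℂ)) r * ph (1 + a - d + r) (N - r) * ph (1 + a - e + r) (N - r) /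
        (ph (d + e - a - (N : ℂ)) r * ph (1 + a) (2 * r) * ph (1 + a + 2 * (r : ℂ)) (N - r) *
          ph (1 + a - d - e) (N - r)) := by
  set w₃ : ℂ := 1 + (d + r) + (e + r) - (1 + a + 2 * r) - ((N - r : ℕ) : ℂ) with hw3_def
  have hw3eq : w₃ = d + e - a - (N : ℂ) + r := by
    rw [hw3_def, Nat.cast_sub hr]; ring
  have hz3 : ph (1 + a + 2 * (r : ℂ)) (N - r) ≠ 0 := by
    have := ph_shift_ne_zero ha (m := 2 * r) (k := N - r) (by omega)
    rwa [show ((2 * r : ℕ) : ℂ) = 2 * (r : ℂ) by push_cast; ring] at this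
  have hw3 : ph w₃ (N - r) ≠ 0 := by
    rw [hw3eq]
    have := ph_shift_ne_zero hde (m := r) (k := N - r) (by omega)
    exact this
  have hterm : ∀ k ∈ Finset.range (N + 1 - r),
      (fun m => ph d m * ph e m * ph (-(N : ℂ)) m /
        (ph (d + e - a - (N : ℂ)) m * (((m - r).factorial : ℕ) : ℂ) * ph (1 + a) (m + r))) (r + k)
      = (ph d r * ph e r * ph (-(N : ℂ)) r /
          (ph (d + e - a - (N : ℂ)) r * ph (1 + a) (2 * r))) *
        (ph (-((N - r : ℕ) : ℂ)) k * ph (d + r) k * ph (e + r) k /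
          ((k.factorial : ℂ) * ph (1 + a + 2 * (r : ℂ)) k * ph w₃ k)) := by
    intro k hk
    have hkN : r + k ≤ N := by have := Finset.mem_range.mp hk; omega
    simp only []
    rw [show r + k - r = k by omega]
    rw [ph_add d r k, ph_add e r k, ph_add (-(N : ℂ)) r k,
      ph_add (d + e - a - (N : ℂ)) r k]
    have e1 : ph (1 + a) (r + k + r) = ph (1 + a) (2 * r) * ph (1 + a + 2 * (r : ℂ)) k := by
      rw [show r + k + r = 2 * r + k by omega, ph_add]
      congr 2
      push_cast; ring
    have e2 : ph (-(N : ℂ) + r) k = ph (-((N - r : ℕ) : ℂ)) k := by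
      congr 1
      rw [Nat.cast_sub hr]; ring
    have e3 : ph (d + e - a - (N : ℂ) + r) k = ph w₃ k := by
      rw [hw3eq]
    rw [e1, e2, e3]
    ring
  rw [Finset.sum_Ico_eq_sum_range, Finset.sum_congr rfl hterm, ← Finset.mul_sum,
    show N + 1 - r = (N - r) + 1 by omega,
    saalschuetz (N - r) (d + r) (e + r) (1 + a + 2 * (r : ℂ)) hz3 hw3,
    show (1 : ℂ) + a + 2 * r - (d + r) - (e + r) = 1 + a - d - e by ring,
    show (1 : ℂ) + a + 2 * r - (d + r) = 1 + a - d + r by ring,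
    show (1 : ℂ) + a + 2 * r - (e + r) = 1 + a - e + r by ring]
  ring

lemma finalstep (N r : ℕ) (a b c d e : ℂ) (hr : r ≤ N)
    (ha : ph (1 + a) (2 * N) ≠ 0)
    (hd : ph (1 + a - d) N ≠ 0) (he : ph (1 + a - e) N ≠ 0)
    (hde : ph (d + e - a - (N : ℂ)) N ≠ 0)
    (hah : ph (a / 2) r ≠ 0)
    (hbr : ph (1 + a - b) r ≠ 0) (hcr : ph (1 + a - c) r ≠ 0) :
    ph (1 + a - d - e) N * ph (1 + a) N / (ph (1 + a - d) N * ph (1 + a - e) N) *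
      (((-1) ^ r * (a + 2 * r) * ph a r * ph b r * ph c r /
          ((r.factorial : ℂ) * ph (1 + a - b) r * ph (1 + a - c) r)) *
        (ph d r * ph e r * ph (-(N : ℂ)) r * ph (1 + a - d + r) (N - r) * ph (1 + a - e + r) (N - r) /
          (ph (d + e - a - (N : ℂ)) r * ph (1 + a) (2 * r) * ph (1 + a + 2 * (r : ℂ)) (N - r) *
            ph (1 + a - d - e) (N - r))))
    = a * (ph a r * ph (1 + a / 2) r * ph b r * ph c r * ph d r * ph e r * ph (-(N : ℂ)) r /
        (ph (a / 2) r * ph (1 + a - b) r * ph (1 + a - c) r * ph (1 + a - d) r *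
          ph (1 + a - e) r * ph (1 + a + (N : ℂ)) r * (r.factorial : ℂ))) := by
  -- split the big Pochhammers
  have B1 : ph (1 + a - d) N = ph (1 + a - d) r * ph (1 + a - d + r) (N - r) := by
    have := ph_add (1 + a - d) r (N - r)
    rwa [show r + (N - r) = N by omega] at this
  have B2 : ph (1 + a - e) N = ph (1 + a - e) r * ph (1 + a - e + r) (N - r) := by
    have := ph_add (1 + a - e) r (N - r)
    rwa [show r + (N - r) = N by omega] at this
  have Rel3 : ph (1 + a) N * ph (1 + a + (N : ℂ)) r
      = ph (1 + a) (2 * r) * ph (1 + a + 2 * (r : ℂ)) (N - r) := by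
    have b3a := ph_add (1 + a) N r
    have b3b := ph_add (1 + a) (2 * r) (N - r)
    rw [show 2 * r + (N - r) = N + r by omega] at b3b
    rw [← b3a, b3b]
    congr 2
    push_cast; ring
  have Rel2 : a * ph (1 + a / 2) r = (a + 2 * r) * ph (a / 2) r := by
    have h1 := ph_one_add (a / 2) r
    have h2 := ph_succ (a / 2) r
    have h3 : a / 2 * ph (a / 2 + 1) r = ph (a / 2) r * (a / 2 + r) := by rw [← h1, h2]
    have harg : ph (a / 2 + 1) r = ph (1 + a / 2) r := by congr 1; ring
    rw [harg] at h3
    linear_combination 2 * h3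
  have Rel1 : ph (1 + a - d - e) N * (-1) ^ r
      = ph (1 + a - d - e) (N - r) * ph (d + e - a - (N : ℂ)) r := by
    have B4 : ph (1 + a - d - e) N
        = ph (1 + a - d - e) (N - r) * ph (1 + a - d - e + ((N - r : ℕ) : ℂ)) r := by
      have := ph_add (1 + a - d - e) (N - r) r
      rwa [show (N - r) + r = N by omega] at this
    have B5 : ph (1 + a - d - e + ((N - r : ℕ) : ℂ)) r = (-1) ^ r * ph (d + e - a - (N : ℂ)) r := by
      rw [← ph_reflect (d + e - a - (N : ℂ)) r]
      congr 1
      rw [Nat.cast_sub hr]; ring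
    rw [B4, B5, show ph (1 + a - d - e) (N - r) * ((-1 : ℂ) ^ r * ph (d + e - a - (N : ℂ)) r) * (-1) ^ r
        = ((-1 : ℂ) * -1) ^ r * (ph (1 + a - d - e) (N - r) * ph (d + e - a - (N : ℂ)) r) by
      rw [mul_pow]; ring]
    norm_num
  -- nonvanishing facts
  have hq1 : ph (1 + a - d) r ≠ 0 := ph_ne_zero_of_le hr hd
  have hq2 : ph (1 + a - e) r ≠ 0 := ph_ne_zero_of_le hr he
  have hq1' : ph (1 + a - d + r) (N - r) ≠ 0 := by
    intro h0; exact hd (by rw [B1, h0, mul_zero])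
  have hq2' : ph (1 + a - e + r) (N - r) ≠ 0 := by
    intro h0; exact he (by rw [B2, h0, mul_zero])
  have hF : ((r.factorial : ℕ) : ℂ) ≠ 0 := fact_ne_zero r
  have hK : ph (d + e - a - (N : ℂ)) r ≠ 0 := ph_ne_zero_of_le hr hde
  have hg2r : ph (1 + a) (2 * r) ≠ 0 := ph_ne_zero_of_le (by omega) ha
  have hgz : ph (1 + a + 2 * (r : ℂ)) (N - r) ≠ 0 := by
    have := ph_shift_ne_zero ha (m := 2 * r) (k := N - r) (by omega)
    rwa [show ((2 * r : ℕ) : ℂ) = 2 * (r : ℂ) by push_cast; ring] at this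
  have hgN : ph (1 + a + (N : ℂ)) r ≠ 0 := by
    have := ph_shift_ne_zero ha (m := N) (k := r) (by omega)
    exact this
  have hgde' : ph (1 + a - d - e) (N - r) ≠ 0 := by
    have hu : ph (d + e - a - (N : ℂ) + r) (N - r) ≠ 0 := ph_shift_ne_zero hde (by omega)
    have hrefl : ph (1 + a - d - e) (N - r)
        = (-1) ^ (N - r) * ph (d + e - a - (N : ℂ) + r) (N - r) := by
      rw [← ph_reflect (d + e - a - (N : ℂ) + r) (N - r)]
      congr 1
      rw [Nat.cast_sub hr]; ring
    rw [hrefl]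
    exact mul_ne_zero (pow_ne_zero _ (by norm_num)) hu
  rw [div_mul_div_comm, div_mul_div_comm, ← mul_div_assoc, B1, B2,
    div_eq_div_iff
      (mul_ne_zero (mul_ne_zero (mul_ne_zero hq1 hq1') (mul_ne_zero hq2 hq2'))
        (mul_ne_zero (mul_ne_zero (mul_ne_zero hF hbr) hcr)
          (mul_ne_zero (mul_ne_zero (mul_ne_zero hK hg2r) hgz) hgde')))
      (mul_ne_zero (mul_ne_zero (mul_ne_zero (mul_ne_zero (mul_ne_zero
        (mul_ne_zero hah hbr) hcr) hq1) hq2) hgN) hF)]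
  linear_combination
    (ph (1 + a - d) r * ph (1 + a - e) r * ph (1 + a - d + r) (N - r) *
      ph (1 + a - e + r) (N - r) * (r.factorial : ℂ) * ph (1 + a - b) r * ph (1 + a - c) r *
      ph a r * ph b r * ph c r * ph d r * ph e r * ph (-(N : ℂ)) r *
      (a + 2 * (r : ℂ)) * ph (a / 2) r * ph (1 + a) N * ph (1 + a + (N : ℂ)) r) * Rel1
    + (ph (1 + a - d) r * ph (1 + a - e) r * ph (1 + a - d + r) (N - r) *
      ph (1 + a - e + r) (N - r) * (r.factorial : ℂ) * ph (1 + a - b) r * ph (1 + a - c) r *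
      ph a r * ph b r * ph c r * ph d r * ph e r * ph (-(N : ℂ)) r *
      (a + 2 * (r : ℂ)) * ph (a / 2) r * ph (1 + a - d - e) (N - r) *
      ph (d + e - a - (N : ℂ)) r) * Rel3
    - (ph (1 + a - d) r * ph (1 + a - e) r * ph (1 + a - d + r) (N - r) *
      ph (1 + a - e + r) (N - r) * (r.factorial : ℂ) * ph (1 + a - b) r * ph (1 + a - c) r *
      ph a r * ph b r * ph c r * ph d r * ph e r * ph (-(N : ℂ)) r *
      ph (1 + a - d - e) (N - r) * ph (d + e - a - (N : ℂ)) r * ph (1 + a) (2 * r) *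
      ph (1 + a + 2 * (r : ℂ)) (N - r)) * Rel2

theorem whipple_generic (N : ℕ) (a b c d e : ℂ)
    (h1 : ∀ n ≤ N, ph (a / 2) n ≠ 0)
    (h2 : ∀ n ≤ N, ph (1 + a - b) n ≠ 0)
    (h3 : ∀ n ≤ N, ph (1 + a - c) n ≠ 0)
    (h4 : ph (1 + a - d) N ≠ 0) (h5 : ph (1 + a - e) N ≠ 0)
    (h7 : ph (d + e - a - (N : ℂ)) N ≠ 0)
    (ha : ph (1 + a) (2 * N) ≠ 0)
    (hbc : ph (1 + a - b - c) N ≠ 0)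
    (ha0 : a ≠ 0) :
    ∑ n ∈ Finset.range (N + 1),
        ph a n * ph (1 + a / 2) n * ph b n * ph c n * ph d n * ph e n *
            ph (-(N : ℂ)) n /
          (ph (a / 2) n * ph (1 + a - b) n * ph (1 + a - c) n * ph (1 + a - d) n *
            ph (1 + a - e) n * ph (1 + a + (N : ℂ)) n * (n.factorial : ℂ)) =
      ph (1 + a - d - e) N * ph (1 + a) N / (ph (1 + a - d) N * ph (1 + a - e) N) *
        ∑ n ∈ Finset.range (N + 1),
          ph (1 + a - b - c) n * ph d n * ph e n * ph (-(N : ℂ)) n /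
            (ph (1 + a - b) n * ph (1 + a - c) n * ph (d + e - a - (N : ℂ)) n *
              (n.factorial : ℂ)) := by
  set T : ℕ → ℕ → ℂ := fun r m =>
    (-1) ^ r * (a + 2 * r) * ph a r * ph b r * ph c r * ph d m * ph e m * ph (-(N : ℂ)) m /
      ((r.factorial : ℂ) * ph (1 + a - b) r * ph (1 + a - c) r * ph (d + e - a - (N : ℂ)) m *
        (((m - r).factorial : ℕ) : ℂ) * ph (1 + a) (m + r)) with hT_def
  apply mul_left_cancel₀ ha0
  have RHSexp : a * (ph (1 + a - d - e) N * ph (1 + a) N / (ph (1 + a - d) N * ph (1 + a - e) N) *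
      ∑ n ∈ Finset.range (N + 1),
        ph (1 + a - b - c) n * ph d n * ph e n * ph (-(N : ℂ)) n /
          (ph (1 + a - b) n * ph (1 + a - c) n * ph (d + e - a - (N : ℂ)) n *
            (n.factorial : ℂ)))
      = ∑ n ∈ Finset.range (N + 1),
        a * (ph a n * ph (1 + a / 2) n * ph b n * ph c n * ph d n * ph e n *
            ph (-(N : ℂ)) n /
          (ph (a / 2) n * ph (1 + a - b) n * ph (1 + a - c) n * ph (1 + a - d) n *
            ph (1 + a - e) n * ph (1 + a + (N : ℂ)) n * (n.factorial : ℂ))) := by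
    have hm : ∀ m ∈ Finset.range (N + 1),
        a * (ph (1 + a - b - c) m * ph d m * ph e m * ph (-(N : ℂ)) m /
          (ph (1 + a - b) m * ph (1 + a - c) m * ph (d + e - a - (N : ℂ)) m *
            (m.factorial : ℂ)))
        = ∑ r ∈ Finset.range (m + 1), T r m := by
      intro m hm'
      have hmN : m ≤ N := by have := Finset.mem_range.mp hm'; omega
      have step1 : a * (ph (1 + a - b - c) m * ph d m * ph e m * ph (-(N : ℂ)) m /
          (ph (1 + a - b) m * ph (1 + a - c) m * ph (d + e - a - (N : ℂ)) m *
            (m.factorial : ℂ)))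
          = (a * ph (1 + a - b - c) m /
              (((m.factorial : ℕ) : ℂ) * ph (1 + a - b) m * ph (1 + a - c) m)) *
            (ph d m * ph e m * ph (-(N : ℂ)) m / ph (d + e - a - (N : ℂ)) m) := by
        ring
      rw [step1, ← L4 m a b c (ph_ne_zero_of_le (by omega) ha) (h2 m hmN) (h3 m hmN)
        (ph_ne_zero_of_le hmN hbc), Finset.sum_mul]
      refine Finset.sum_congr rfl fun r hr => ?_
      rw [hT_def]
      ring
    calc a * (ph (1 + a - d - e) N * ph (1 + a) N / (ph (1 + a - d) N * ph (1 + a - e) N) *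
          ∑ n ∈ Finset.range (N + 1),
            ph (1 + a - b - c) n * ph d n * ph e n * ph (-(N : ℂ)) n /
              (ph (1 + a - b) n * ph (1 + a - c) n * ph (d + e - a - (N : ℂ)) n *
                (n.factorial : ℂ)))
        = ph (1 + a - d - e) N * ph (1 + a) N / (ph (1 + a - d) N * ph (1 + a - e) N) *
            ∑ n ∈ Finset.range (N + 1),
              a * (ph (1 + a - b - c) n * ph d n * ph e n * ph (-(N : ℂ)) n /
                (ph (1 + a - b) n * ph (1 + a - c) n * ph (d + e - a - (N : ℂ)) n *
                  (n.factorial : ℂ))) := by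
          rw [mul_left_comm, Finset.mul_sum]
      _ = ph (1 + a - d - e) N * ph (1 + a) N / (ph (1 + a - d) N * ph (1 + a - e) N) *
            ∑ m ∈ Finset.range (N + 1), ∑ r ∈ Finset.range (m + 1), T r m := by
          rw [Finset.sum_congr rfl hm]
      _ = ph (1 + a - d - e) N * ph (1 + a) N / (ph (1 + a - d) N * ph (1 + a - e) N) *
            ∑ r ∈ Finset.Ico 0 (N + 1), ∑ m ∈ Finset.Ico r (N + 1), T r m := by
          simp only [Finset.range_eq_Ico]
          rw [← Finset.sum_Ico_Ico_comm 0 (N + 1)]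
      _ = ph (1 + a - d - e) N * ph (1 + a) N / (ph (1 + a - d) N * ph (1 + a - e) N) *
            ∑ r ∈ Finset.Ico 0 (N + 1),
              ((-1) ^ r * (a + 2 * r) * ph a r * ph b r * ph c r /
                  ((r.factorial : ℂ) * ph (1 + a - b) r * ph (1 + a - c) r)) *
                (ph d r * ph e r * ph (-(N : ℂ)) r * ph (1 + a - d + r) (N - r) *
                    ph (1 + a - e + r) (N - r) /
                  (ph (d + e - a - (N : ℂ)) r * ph (1 + a) (2 * r) *
                    ph (1 + a + 2 * (r : ℂ)) (N - r) * ph (1 + a - d - e) (N - r))) := by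
          congr 1
          refine Finset.sum_congr rfl fun r hr => ?_
          have hrN : r ≤ N := by
            have := (Finset.mem_Ico.mp hr).2; omega
          have pull : ∀ m ∈ Finset.Ico r (N + 1),
              T r m = ((-1) ^ r * (a + 2 * r) * ph a r * ph b r * ph c r /
                  ((r.factorial : ℂ) * ph (1 + a - b) r * ph (1 + a - c) r)) *
                (ph d m * ph e m * ph (-(N : ℂ)) m /
                  (ph (d + e - a - (N : ℂ)) m * (((m - r).factorial : ℕ) : ℂ) *
                    ph (1 + a) (m + r))) := by
            intro m _
            simp only [hT_def]
            ring
          rw [Finset.sum_congr rfl pull, ← Finset.mul_sum, L5 N r a d e hrN ha h7]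
      _ = ∑ r ∈ Finset.Ico 0 (N + 1),
            ph (1 + a - d - e) N * ph (1 + a) N / (ph (1 + a - d) N * ph (1 + a - e) N) *
              (((-1) ^ r * (a + 2 * r) * ph a r * ph b r * ph c r /
                  ((r.factorial : ℂ) * ph (1 + a - b) r * ph (1 + a - c) r)) *
                (ph d r * ph e r * ph (-(N : ℂ)) r * ph (1 + a - d + r) (N - r) *
                    ph (1 + a - e + r) (N - r) /
                  (ph (d + e - a - (N : ℂ)) r * ph (1 + a) (2 * r) *
                    ph (1 + a + 2 * (r : ℂ)) (N - r) * ph (1 + a - d - e) (N - r)))) := by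
          rw [Finset.mul_sum]
      _ = ∑ n ∈ Finset.range (N + 1),
            a * (ph a n * ph (1 + a / 2) n * ph b n * ph c n * ph d n * ph e n *
                ph (-(N : ℂ)) n /
              (ph (a / 2) n * ph (1 + a - b) n * ph (1 + a - c) n * ph (1 + a - d) n *
                ph (1 + a - e) n * ph (1 + a + (N : ℂ)) n * (n.factorial : ℂ))) := by
          rw [← Finset.range_eq_Ico]
          refine Finset.sum_congr rfl fun r hr => ?_
          have hrN : r ≤ N := by have := Finset.mem_range.mp hr; omega
          exact finalstep N r a b c d e hrN ha h4 h5 h7 (h1 r hrN) (h2 r hrN) (h3 r hrN)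
  rw [RHSexp, Finset.mul_sum]

lemma affine_zero_finite (x κ : ℂ) (hκ : κ ≠ 0) (n : ℕ) :
    {t : ℂ | ph (x + κ * t) n = 0}.Finite := by
  have hsub : {t : ℂ | ph (x + κ * t) n = 0} ⊆
      ⋃ i ∈ Finset.range n, {t : ℂ | x + κ * t + (i : ℂ) = 0} := by
    intro t ht
    simp only [Set.mem_setOf_eq, ph] at ht
    obtain ⟨i, hi, h0⟩ := Finset.prod_eq_zero_iff.mp ht
    exact Set.mem_biUnion hi h0
  refine Set.Finite.subset (Set.Finite.biUnion (Finset.range n).finite_toSet fun i _ => ?_) hsub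
  refine Set.Finite.subset (Set.finite_singleton ((-x - (i : ℂ)) / κ)) ?_
  intro t ht
  simp only [Set.mem_setOf_eq] at ht
  simp only [Set.mem_singleton_iff]
  rw [eq_div_iff hκ]
  linear_combination ht

lemma cphc (e : ℂ → ℂ) (he : Continuous e) (n : ℕ) : Continuous fun t : ℂ => ph (e t) n := by
  unfold ph
  exact continuous_finset_prod _ fun i _ => by fun_prop

/-- Whipple's transformation of a terminating very well-poised ₇F₆(1) into a
balanced ₄F₃(1). -/
theorem whipple_transformation (N : ℕ) (a b c d e : ℂ)
    (h1 : ∀ n ≤ N, ph (a / 2) n ≠ 0)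
    (h2 : ∀ n ≤ N, ph (1 + a - b) n ≠ 0)
    (h3 : ∀ n ≤ N, ph (1 + a - c) n ≠ 0)
    (h4 : ∀ n ≤ N, ph (1 + a - d) n ≠ 0)
    (h5 : ∀ n ≤ N, ph (1 + a - e) n ≠ 0)
    (h6 : ∀ n ≤ N, ph (1 + a + (N : ℂ)) n ≠ 0)
    (h7 : ∀ n ≤ N, ph (d + e - a - (N : ℂ)) n ≠ 0)
    (h8 : ph (1 + a - d) N ≠ 0) (h9 : ph (1 + a - e) N ≠ 0) :
    ∑ n ∈ Finset.range (N + 1),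
        ph a n * ph (1 + a / 2) n * ph b n * ph c n * ph d n * ph e n *
            ph (-(N : ℂ)) n /
          (ph (a / 2) n * ph (1 + a - b) n * ph (1 + a - c) n * ph (1 + a - d) n *
            ph (1 + a - e) n * ph (1 + a + (N : ℂ)) n * (n.factorial : ℂ)) =
      ph (1 + a - d - e) N * ph (1 + a) N / (ph (1 + a - d) N * ph (1 + a - e) N) *
        ∑ n ∈ Finset.range (N + 1),
          ph (1 + a - b - c) n * ph d n * ph e n * ph (-(N : ℂ)) n /
            (ph (1 + a - b) n * ph (1 + a - c) n * ph (d + e - a - (N : ℂ)) n *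
              (n.factorial : ℂ)) := by
  classical
  set F : ℂ → ℂ := fun t =>
    ∑ n ∈ Finset.range (N + 1),
      ph (a + 2 * t) n * ph (1 + (a + 2 * t) / 2) n * ph (b + 3 * t) n * ph (c + 3 * t) n *
          ph (d + 3 * t) n * ph (e + 3 * t) n * ph (-(N : ℂ)) n /
        (ph ((a + 2 * t) / 2) n * ph (1 + (a + 2 * t) - (b + 3 * t)) n *
          ph (1 + (a + 2 * t) - (c + 3 * t)) n * ph (1 + (a + 2 * t) - (d + 3 * t)) n *
          ph (1 + (a + 2 * t) - (e + 3 * t)) n * ph (1 + (a + 2 * t) + (N : ℂ)) n *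
          (n.factorial : ℂ)) with hF_def
  set G : ℂ → ℂ := fun t =>
    ph (1 + (a + 2 * t) - (d + 3 * t) - (e + 3 * t)) N * ph (1 + (a + 2 * t)) N /
        (ph (1 + (a + 2 * t) - (d + 3 * t)) N * ph (1 + (a + 2 * t) - (e + 3 * t)) N) *
      ∑ n ∈ Finset.range (N + 1),
        ph (1 + (a + 2 * t) - (b + 3 * t) - (c + 3 * t)) n * ph (d + 3 * t) n *
            ph (e + 3 * t) n * ph (-(N : ℂ)) n /
          (ph (1 + (a + 2 * t) - (b + 3 * t)) n * ph (1 + (a + 2 * t) - (c + 3 * t)) n *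
            ph ((d + 3 * t) + (e + 3 * t) - (a + 2 * t) - (N : ℂ)) n *
            (n.factorial : ℂ)) with hG_def
  set bad : Set ℂ :=
    {t | ph (a / 2 + 1 * t) N = 0} ∪ {t | ph ((1 + a - b) + (-1) * t) N = 0} ∪
    {t | ph ((1 + a - c) + (-1) * t) N = 0} ∪ {t | ph ((1 + a - d) + (-1) * t) N = 0} ∪
    {t | ph ((1 + a - e) + (-1) * t) N = 0} ∪ {t | ph ((d + e - a - (N : ℂ)) + 4 * t) N = 0} ∪
    {t | ph ((1 + a) + 2 * t) (2 * N) = 0} ∪ {t | ph ((1 + a - b - c) + (-4) * t) N = 0} ∪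
    {t | ph (a + 2 * t) 1 = 0} with hbad_def
  have hfin : bad.Finite := by
    rw [hbad_def]
    refine ((((((((affine_zero_finite _ _ (by norm_num) _).union
      (affine_zero_finite _ _ (by norm_num) _)).union
      (affine_zero_finite _ _ (by norm_num) _)).union
      (affine_zero_finite _ _ (by norm_num) _)).union
      (affine_zero_finite _ _ (by norm_num) _)).union
      (affine_zero_finite _ _ (by norm_num) _)).union
      (affine_zero_finite _ _ (by norm_num) _)).union
      (affine_zero_finite _ _ (by norm_num) _)).union
      (affine_zero_finite _ _ (by norm_num) _)
  have hev : ∀ᶠ t in nhdsWithin (0 : ℂ) {(0 : ℂ)}ᶜ, F t = G t := by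
    have hopen : (bad \ {(0 : ℂ)})ᶜ ∈ nhds (0 : ℂ) := by
      refine ((hfin.subset Set.diff_subset).isClosed).isOpen_compl.mem_nhds ?_
      simp [Set.mem_diff]
    filter_upwards [mem_nhdsWithin_of_mem_nhds hopen, self_mem_nhdsWithin] with t ht1 ht2
    have ht0 : t ≠ 0 := ht2
    have htbad : t ∉ bad := fun hb => ht1 ⟨hb, ht0⟩
    rw [hbad_def] at htbad
    simp only [Set.mem_union, Set.mem_setOf_eq, not_or] at htbad
    obtain ⟨⟨⟨⟨⟨⟨⟨⟨hs1, hs2⟩, hs3⟩, hs4⟩, hs5⟩, hs7⟩, hs8⟩, hs9⟩, hs10⟩ := htbad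
    rw [hF_def, hG_def]
    refine whipple_generic N (a + 2 * t) (b + 3 * t) (c + 3 * t) (d + 3 * t) (e + 3 * t)
      ?_ ?_ ?_ ?_ ?_ ?_ ?_ ?_ ?_
    · intro n hn
      have := ph_ne_zero_of_le hn hs1
      rwa [show a / 2 + 1 * t = (a + 2 * t) / 2 by ring] at this
    · intro n hn
      have := ph_ne_zero_of_le hn hs2
      rwa [show (1 + a - b) + (-1) * t = 1 + (a + 2 * t) - (b + 3 * t) by ring] at this
    · intro n hn
      have := ph_ne_zero_of_le hn hs3
      rwa [show (1 + a - c) + (-1) * t = 1 + (a + 2 * t) - (c + 3 * t) by ring] at this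
    · have := hs4
      rwa [show (1 + a - d) + (-1) * t = 1 + (a + 2 * t) - (d + 3 * t) by ring] at this
    · have := hs5
      rwa [show (1 + a - e) + (-1) * t = 1 + (a + 2 * t) - (e + 3 * t) by ring] at this
    · have := hs7
      rwa [show (d + e - a - (N : ℂ)) + 4 * t
        = (d + 3 * t) + (e + 3 * t) - (a + 2 * t) - (N : ℂ) by ring] at this
    · have := hs8
      rwa [show (1 + a) + 2 * t = 1 + (a + 2 * t) by ring] at this
    · have := hs9
      rwa [show (1 + a - b - c) + (-4) * t
        = 1 + (a + 2 * t) - (b + 3 * t) - (c + 3 * t) by ring] at this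
    · intro h0
      apply hs10
      rw [ph_one]
      exact h0
  have hFc : ContinuousAt F 0 := by
    rw [hF_def]
    apply tendsto_finset_sum
    intro n hn
    have hnN : n ≤ N := by have := Finset.mem_range.mp hn; omega
    refine ContinuousAt.div (Continuous.continuousAt ?_) (Continuous.continuousAt ?_) ?_
    · exact (((((((cphc _ (by fun_prop) n).mul (cphc _ (by fun_prop) n)).mul
        (cphc _ (by fun_prop) n)).mul (cphc _ (by fun_prop) n)).mul
        (cphc _ (by fun_prop) n)).mul (cphc _ (by fun_prop) n)).mul
        (cphc _ (by fun_prop) n))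
    · exact ((((((cphc _ (by fun_prop) n).mul (cphc _ (by fun_prop) n)).mul
        (cphc _ (by fun_prop) n)).mul (cphc _ (by fun_prop) n)).mul
        (cphc _ (by fun_prop) n)).mul (cphc _ (by fun_prop) n)).mul continuous_const
    · simp only [mul_zero, add_zero]
      exact mul_ne_zero (mul_ne_zero (mul_ne_zero (mul_ne_zero (mul_ne_zero
        (mul_ne_zero (h1 n hnN) (h2 n hnN)) (h3 n hnN)) (h4 n hnN)) (h5 n hnN))
        (h6 n hnN)) (fact_ne_zero n)
  have hGc : ContinuousAt G 0 := by
    rw [hG_def]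
    refine ContinuousAt.mul (ContinuousAt.div (Continuous.continuousAt ?_)
      (Continuous.continuousAt ?_) ?_) ?_
    · exact (cphc _ (by fun_prop) N).mul (cphc _ (by fun_prop) N)
    · exact (cphc _ (by fun_prop) N).mul (cphc _ (by fun_prop) N)
    · simp only [mul_zero, add_zero]
      exact mul_ne_zero h8 h9
    · apply tendsto_finset_sum
      intro n hn
      have hnN : n ≤ N := by have := Finset.mem_range.mp hn; omega
      refine ContinuousAt.div (Continuous.continuousAt ?_) (Continuous.continuousAt ?_) ?_
      · exact (((cphc _ (by fun_prop) n).mul (cphc _ (by fun_prop) n)).mul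
          (cphc _ (by fun_prop) n)).mul (cphc _ (by fun_prop) n)
      · exact (((cphc _ (by fun_prop) n).mul (cphc _ (by fun_prop) n)).mul
          (cphc _ (by fun_prop) n)).mul continuous_const
      · simp only [mul_zero, add_zero]
        exact mul_ne_zero (mul_ne_zero (mul_ne_zero (h2 n hnN) (h3 n hnN)) (h7 n hnN))
          (fact_ne_zero n)
  have h00 : F 0 = G 0 :=
    tendsto_nhds_unique (Filter.Tendsto.congr' hev hFc.continuousWithinAt)
      hGc.continuousWithinAt
  rw [hF_def, hG_def] at h00
  simpa only [mul_zero, add_zero] using h00
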